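/- arXiv:1507.07132 — 4 statements merged into one kernel-verified Lean document; each statement's English description precedes it below -/
import Mathlib

section
/- With notation as above, let each φ(x,y) ≤ φ̄ ≤ 1. Then for sets S₁,…,S_ℓ each of size k, φ(z, S₁ ∪ ⋯ ∪ S_ℓ) ≥ (1 - kℓφ̄) · ∑_{i=1}^ℓ φ(z, S_i). -/
/-- Weierstrass product inequality: `1 - ∑ p ≤ ∏ (1 - p)` for nonneg `p`. -/
lemma weierstrass_aux {ι : Type*} (F : Finset ι) (p : ι → ℝ)
    (h0 : ∀ i ∈ F, 0 ≤ p i) (h1 : ∀ i ∈ F, p i ≤ 1) :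
    1 - ∑ i ∈ F, p i ≤ ∏ i ∈ F, (1 - p i) := by
  induction F using Finset.cons_induction with
  | empty => simp
  | cons j F hj ih =>
    rw [Finset.prod_cons, Finset.sum_cons]
    have h0' : ∀ i ∈ F, 0 ≤ p i := fun i hi => h0 i (Finset.mem_cons_of_mem hi)
    have h1' : ∀ i ∈ F, p i ≤ 1 := fun i hi => h1 i (Finset.mem_cons_of_mem hi)
    have ihF := ih h0' h1'
    have hpj : 0 ≤ p j := h0 j (Finset.mem_cons_self _ _)
    have hpj1 : p j ≤ 1 := h1 j (Finset.mem_cons_self _ _)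
    have hsum : 0 ≤ ∑ i ∈ F, p i := Finset.sum_nonneg h0'
    nlinarith [mul_nonneg (sub_nonneg.mpr hpj1) (sub_nonneg.mpr ihF),
      mul_nonneg hsum hpj]

/-- Key induction: if each `p i ∈ [0,1]` and `p i ≤ b` with `b ≥ 0`, then
`∏ (1 - p i) ≤ 1 - (1 - |F| b) ∑ p i`. -/
lemma bonferroni_aux {ι : Type*} (F : Finset ι) (p : ι → ℝ) (b : ℝ) (hb : 0 ≤ b)
    (h0 : ∀ i ∈ F, 0 ≤ p i) (h1 : ∀ i ∈ F, p i ≤ 1) (hpb : ∀ i ∈ F, p i ≤ b) :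
    ∏ i ∈ F, (1 - p i) ≤ 1 - (1 - F.card * b) * ∑ i ∈ F, p i := by
  induction F using Finset.cons_induction with
  | empty => simp
  | cons j F hj ih =>
    have h0' : ∀ i ∈ F, 0 ≤ p i := fun i hi => h0 i (Finset.mem_cons_of_mem hi)
    have h1' : ∀ i ∈ F, p i ≤ 1 := fun i hi => h1 i (Finset.mem_cons_of_mem hi)
    have hpb' : ∀ i ∈ F, p i ≤ b := fun i hi => hpb i (Finset.mem_cons_of_mem hi)
    have ihF := ih h0' h1' hpb'
    have hpj0 : 0 ≤ p j := h0 j (Finset.mem_cons_self _ _)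
    have hpj1 : p j ≤ 1 := h1 j (Finset.mem_cons_self _ _)
    have hpjb : p j ≤ b := hpb j (Finset.mem_cons_self _ _)
    have hsum0 : 0 ≤ ∑ i ∈ F, p i := Finset.sum_nonneg h0'
    have hsumb : ∑ i ∈ F, p i ≤ F.card * b := by
      calc ∑ i ∈ F, p i ≤ ∑ _i ∈ F, b := Finset.sum_le_sum hpb'
        _ = F.card * b := by rw [Finset.sum_const, nsmul_eq_mul]
    rw [Finset.prod_cons, Finset.sum_cons, Finset.card_cons]
    have step : (1 - p j) * ∏ i ∈ F, (1 - p i)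
        ≤ (1 - p j) * (1 - (1 - F.card * b) * ∑ i ∈ F, p i) :=
      mul_le_mul_of_nonneg_left ihF (by linarith)
    refine step.trans ?_
    push_cast
    set s := ∑ i ∈ F, p i
    set n : ℝ := (F.card : ℝ)
    have hn0 : 0 ≤ n := Nat.cast_nonneg _
    rcases le_or_gt (n * b) 1 with hcase | hcase
    · nlinarith [mul_le_mul_of_nonneg_right
        (mul_le_mul_of_nonneg_right hpjb hsum0) (sub_nonneg.mpr hcase),
        mul_nonneg (mul_nonneg hn0 hb) hpj0, mul_nonneg hb hpj0,
        mul_nonneg (mul_nonneg hb hsum0) (mul_nonneg hn0 hb),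
        mul_nonneg hb hsum0]
    · nlinarith [mul_nonneg hpj0 hsum0, mul_nonneg (mul_nonneg hpj0 hsum0) (sub_nonneg.mpr hcase.le)]

/-- Bonferroni-type lower bound: if `φ ≤ φ̄` and `S₁,…,S_ℓ` are pairwise disjoint
finite sets each of cardinality `k`, then the probability that `z` connects to at
least one point of the union is at least `(1 - k ℓ φ̄)` times the sum of the
individual connection probabilities. -/
theorem connection_prob_union_ge {X : Type*} [DecidableEq X]
    (φ : X → X → ℝ) (hφ0 : ∀ x y, 0 ≤ φ x y) (hφ1 : ∀ x y, φ x y ≤ 1)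
    (hsym : ∀ x y, φ x y = φ y x)
    (φbar : ℝ) (hbar : ∀ x y, φ x y ≤ φbar) (hbar1 : φbar ≤ 1)
    (k ℓ : ℕ) (S : Fin ℓ → Finset X)
    (hcard : ∀ i, (S i).card = k)
    (hdisj : ∀ i j, i ≠ j → Disjoint (S i) (S j)) (z : X) :
    1 - ∏ y ∈ Finset.univ.biUnion S, (1 - φ z y) ≥
      (1 - k * ℓ * φbar) * ∑ i : Fin ℓ, (1 - ∏ y ∈ S i, (1 - φ z y)) := by
  have hbar0 : 0 ≤ φbar := le_trans (hφ0 z z) (hbar z z)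
  set p : Fin ℓ → ℝ := fun i => 1 - ∏ y ∈ S i, (1 - φ z y) with hp
  have hprod01 : ∀ i : Fin ℓ, 0 ≤ ∏ y ∈ S i, (1 - φ z y) ∧ ∏ y ∈ S i, (1 - φ z y) ≤ 1 := by
    intro i
    constructor
    · exact Finset.prod_nonneg fun y _ => by linarith [hφ1 z y]
    · exact Finset.prod_le_one (fun y _ => by linarith [hφ1 z y]) (fun y _ => by linarith [hφ0 z y])
  have hp0 : ∀ i ∈ (Finset.univ : Finset (Fin ℓ)), 0 ≤ p i := by
    intro i _; have := (hprod01 i).2; simp only [hp]; linarith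
  have hp1 : ∀ i ∈ (Finset.univ : Finset (Fin ℓ)), p i ≤ 1 := by
    intro i _; have := (hprod01 i).1; simp only [hp]; linarith
  have hpb : ∀ i ∈ (Finset.univ : Finset (Fin ℓ)), p i ≤ (k : ℝ) * φbar := by
    intro i _
    have hw := weierstrass_aux (S i) (fun y => φ z y) (fun y _ => hφ0 z y)
      (fun y _ => hφ1 z y)
    have hsumle : ∑ y ∈ S i, φ z y ≤ (k : ℝ) * φbar := by
      calc ∑ y ∈ S i, φ z y ≤ ∑ _y ∈ S i, φbar := Finset.sum_le_sum fun y _ => hbar z y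
        _ = (k : ℝ) * φbar := by rw [Finset.sum_const, nsmul_eq_mul, hcard i]
    simp only [hp]; linarith
  have hunion : ∏ y ∈ Finset.univ.biUnion S, (1 - φ z y)
      = ∏ i : Fin ℓ, ∏ y ∈ S i, (1 - φ z y) := by
    apply Finset.prod_biUnion
    intro i _ j _ hij
    exact hdisj i j hij
  have hprodp : ∏ i : Fin ℓ, ∏ y ∈ S i, (1 - φ z y) = ∏ i : Fin ℓ, (1 - p i) := by
    apply Finset.prod_congr rfl
    intro i _; simp [hp]
  have key := bonferroni_aux (Finset.univ : Finset (Fin ℓ)) p ((k : ℝ) * φbar)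
    (mul_nonneg (Nat.cast_nonneg _) hbar0) hp0 hp1 hpb
  rw [Finset.card_univ, Fintype.card_fin] at key
  rw [ge_iff_le, hunion, hprodp]
  have : (k : ℝ) * ℓ * φbar = (ℓ : ℝ) * ((k : ℝ) * φbar) := by ring
  rw [this]
  linarith [key]
end

section
/- Let α > 0 and let Z_α be Poisson with parameter α. For any A ⊆ ℕ, let h : ℕ → ℝ be the solution with h(0) = 0 of the Stein equation α·h(i+1) - i·h(i) = 1_A(i) - P(Z_α ∈ A) for all i ∈ ℕ. Then sup_i |h(i+1) - h(i)| ≤ min(1, 1/α). -/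
/-!
Write `p = poissonPmf α`. Multiplying the Stein equation at `i` by `p i` and using
`(i + 1) p (i + 1) = α p i` makes it telescope, which gives the closed form
`α p j h (j + 1) = P(Z ∈ A, Z ≤ j) P(Z > j) - P(Z ∈ A, Z > j) P(Z ≤ j)`.
In the increment `h (j + 2) - h (j + 1)` the mass of `A` at or below `j` and above `j + 1`
contributes non-positively, because the ratio `p (n + 1) / p n = α / (n + 1)` decreases;
only the point `j + 1` contributes positively, and by at most `(1 - e^{-α}) / α`.
Since `-h` solves the Stein equation for `Aᶜ`, the same bound holds for `h (i) - h (i + 1)`.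
-/

open Real

/-- The Poisson pmf with real parameter `r`. -/
noncomputable def poissonPmf (r : ℝ) (n : ℕ) : ℝ := Real.exp (-r) * r ^ n / n.factorial

open Finset

lemma hasSum_poissonPmf (r : ℝ) : HasSum (poissonPmf r) 1 := by
  have h := (NormedSpace.expSeries_div_hasSum_exp r).mul_left (exp (-r))
  rw [← Real.exp_eq_exp_ℝ, ← exp_add, neg_add_cancel, exp_zero] at h
  have hpmf : poissonPmf r = fun n => exp (-r) * (r ^ n / n.factorial) :=
    funext fun n => mul_div_assoc _ _ _
  rwa [hpmf]

lemma poissonPmf_zero (r : ℝ) : poissonPmf r 0 = exp (-r) := by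
  simp [poissonPmf]

lemma poissonPmf_nonneg {r : ℝ} (hr : 0 ≤ r) (n : ℕ) : 0 ≤ poissonPmf r n := by
  unfold poissonPmf; positivity

lemma poissonPmf_pos {r : ℝ} (hr : 0 < r) (n : ℕ) : 0 < poissonPmf r n := by
  unfold poissonPmf; positivity

lemma succ_mul_poissonPmf_succ (r : ℝ) (n : ℕ) :
    (n + 1 : ℝ) * poissonPmf r (n + 1) = r * poissonPmf r n := by
  rw [poissonPmf, poissonPmf, Nat.factorial_succ, Nat.cast_mul]
  field_simp
  push_cast
  ring

/-- The ratio `p (n + 1) / p n = r / (n + 1)` is decreasing in `n`. -/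
lemma poissonPmf_succ_mul_le {r : ℝ} (hr : 0 ≤ r) {i j : ℕ} (hij : i ≤ j) :
    poissonPmf r (j + 1) * poissonPmf r i ≤ poissonPmf r j * poissonPmf r (i + 1) := by
  have hj := succ_mul_poissonPmf_succ r j
  have hi := succ_mul_poissonPmf_succ r i
  have hij' : (0 : ℝ) ≤ j - i := sub_nonneg.2 (Nat.cast_le.2 hij)
  have hprod : 0 ≤ r * poissonPmf r i * poissonPmf r j :=
    mul_nonneg (mul_nonneg hr (poissonPmf_nonneg hr i)) (poissonPmf_nonneg hr j)
  refine le_of_mul_le_mul_left ?_ (by positivity : (0 : ℝ) < (i + 1) * (j + 1))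
  linear_combination (i + 1 : ℝ) * poissonPmf r i * hj - (j + 1 : ℝ) * poissonPmf r j * hi
    + mul_nonneg hij' hprod

def headSum (w : ℕ → ℝ) (j : ℕ) : ℝ := ∑ i ∈ range (j + 1), w i

noncomputable def tailSum (w : ℕ → ℝ) (j : ℕ) : ℝ := ∑' k, w (k + (j + 1))

section HeadTail

variable {w : ℕ → ℝ}

lemma headSum_add_tailSum (hw : Summable w) (j : ℕ) : headSum w j + tailSum w j = ∑' n, w n :=
  hw.sum_add_tsum_nat_add (j + 1)

lemma headSum_succ (w : ℕ → ℝ) (j : ℕ) : headSum w (j + 1) = headSum w j + w (j + 1) :=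
  sum_range_succ w (j + 1)

lemma tailSum_eq_add_tailSum_succ (hw : Summable w) (j : ℕ) :
    tailSum w j = w (j + 1) + tailSum w (j + 1) := by
  rw [tailSum, ((summable_nat_add_iff (j + 1)).2 hw).tsum_eq_zero_add, tailSum, zero_add]
  exact congrArg _ (tsum_congr fun k => congrArg w (by ring))

lemma headSum_nonneg (hw : 0 ≤ w) (j : ℕ) : 0 ≤ headSum w j :=
  sum_nonneg fun i _ => hw i

lemma tailSum_nonneg (hw : 0 ≤ w) (j : ℕ) : 0 ≤ tailSum w j :=
  tsum_nonneg fun _ => hw _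

end HeadTail

lemma headSum_add_tailSum_poissonPmf (r : ℝ) (j : ℕ) :
    headSum (poissonPmf r) j + tailSum (poissonPmf r) j = 1 :=
  (headSum_add_tailSum (hasSum_poissonPmf r).summable j).trans (hasSum_poissonPmf r).tsum_eq

lemma poissonPmf_succ_mul_headSum_le {r : ℝ} (hr : 0 ≤ r) (j : ℕ) :
    poissonPmf r (j + 1) * headSum (poissonPmf r) j ≤
      poissonPmf r j * (headSum (poissonPmf r) (j + 1) - poissonPmf r 0) := by
  rw [headSum, headSum, sum_range_succ' _ (j + 1), add_sub_cancel_right, mul_sum, mul_sum]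
  exact sum_le_sum fun i hi =>
    poissonPmf_succ_mul_le hr (Nat.lt_succ_iff.1 (mem_range.1 hi))

lemma poissonPmf_mul_tailSum_succ_le {r : ℝ} (hr : 0 ≤ r) (j : ℕ) :
    poissonPmf r j * tailSum (poissonPmf r) (j + 1) ≤
      poissonPmf r (j + 1) * tailSum (poissonPmf r) j := by
  have hs := (hasSum_poissonPmf r).summable
  rw [tailSum, tailSum, ← tsum_mul_left, ← tsum_mul_left]
  refine Summable.tsum_le_tsum (fun k => ?_) (((summable_nat_add_iff _).2 hs).mul_left _)
    (((summable_nat_add_iff _).2 hs).mul_left _)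
  rw [mul_comm]
  exact (poissonPmf_succ_mul_le hr (by omega : j ≤ k + (j + 1))).trans_eq (mul_comm _ _)

lemma mul_poissonPmf_mul_eq_sum {α : ℝ} {h f : ℕ → ℝ}
    (hf : ∀ i : ℕ, α * h (i + 1) - i * h i = f i) (j : ℕ) :
    α * poissonPmf α j * h (j + 1) = ∑ i ∈ range (j + 1), poissonPmf α i * f i := by
  induction j with
  | zero =>
    rw [zero_add, sum_range_one]
    linear_combination poissonPmf α 0 * hf 0
  | succ j ih =>
    rw [sum_range_succ, ← ih, ← hf (j + 1)]
    push_cast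
    linear_combination h (j + 1) * succ_mul_poissonPmf_succ α j

def IsPoissonSteinSolution (α : ℝ) (A : Set ℕ) (h : ℕ → ℝ) : Prop :=
  ∀ i : ℕ, α * h (i + 1) - i * h i =
    Set.indicator A (fun _ => (1 : ℝ)) i - ∑' n : ℕ, Set.indicator A (poissonPmf α) n

namespace IsPoissonSteinSolution

variable {α : ℝ} {A : Set ℕ} {h : ℕ → ℝ}

lemma mul_poissonPmf_mul_eq (hh : IsPoissonSteinSolution α A h) (j : ℕ) :
    α * poissonPmf α j * h (j + 1) =
      headSum (A.indicator (poissonPmf α)) j * tailSum (poissonPmf α) j -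
        tailSum (A.indicator (poissonPmf α)) j * headSum (poissonPmf α) j := by
  have hs := (hasSum_poissonPmf α).summable
  have hpmf : ∀ i, poissonPmf α i * A.indicator (fun _ => (1 : ℝ)) i =
      A.indicator (poissonPmf α) i := fun i => by by_cases hi : i ∈ A <;> simp [hi]
  have hsum : ∑ i ∈ range (j + 1), poissonPmf α i *
      (A.indicator (fun _ => (1 : ℝ)) i - ∑' n, A.indicator (poissonPmf α) n) =
      headSum (A.indicator (poissonPmf α)) j -
        (∑' n, A.indicator (poissonPmf α) n) * headSum (poissonPmf α) j := by
    simp only [headSum, mul_sub, hpmf, sum_sub_distrib, ← sum_mul, mul_comm]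
  rw [mul_poissonPmf_mul_eq_sum hh j, hsum, ← headSum_add_tailSum (hs.indicator A) j]
  linear_combination -headSum (A.indicator (poissonPmf α)) j *
    (headSum_add_tailSum hs j).trans (hasSum_poissonPmf α).tsum_eq

lemma compl (hh : IsPoissonSteinSolution α A h) : IsPoissonSteinSolution α Aᶜ (-h) := by
  have hs := (hasSum_poissonPmf α).summable
  intro i
  simp only [Set.indicator_compl, Pi.sub_apply, Pi.neg_apply]
  rw [hs.tsum_sub (hs.indicator A), (hasSum_poissonPmf α).tsum_eq]
  linear_combination -hh i

lemma mul_apply_one_le (hh : IsPoissonSteinSolution α A h) (hα : 0 < α) :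
    α * h 1 ≤ 1 - exp (-α) := by
  have hp := poissonPmf_pos hα
  have hw : 0 ≤ A.indicator (poissonPmf α) := Set.indicator_nonneg fun n _ => (hp n).le
  have hwp : A.indicator (poissonPmf α) ≤ poissonPmf α :=
    Set.indicator_le_self' fun n _ => (hp n).le
  have hsol := hh.mul_poissonPmf_mul_eq 0
  have hF := headSum_add_tailSum_poissonPmf α 0
  simp only [headSum, zero_add, sum_range_one] at hsol hF
  rw [← poissonPmf_zero]
  set p := poissonPmf α
  set w := A.indicator p
  refine le_of_mul_le_mul_left ?_ (hp 0)
  calc p 0 * (α * h 1) = w 0 * tailSum p 0 - tailSum w 0 * p 0 := by linear_combination hsol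
    _ ≤ w 0 * tailSum p 0 := sub_le_self _ (mul_nonneg (tailSum_nonneg hw 0) (hp 0).le)
    _ ≤ p 0 * (1 - p 0) :=
      mul_le_mul (hwp 0) (by linarith) (tailSum_nonneg (fun n => (hp n).le) 0) (hp 0).le

lemma mul_sub_succ_le (hh : IsPoissonSteinSolution α A h) (hα : 0 < α) (j : ℕ) :
    α * (h (j + 1 + 1) - h (j + 1)) ≤ 1 - exp (-α) := by
  have hp := poissonPmf_pos hα
  have hw : 0 ≤ A.indicator (poissonPmf α) := Set.indicator_nonneg fun n _ => (hp n).le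
  have hwp : A.indicator (poissonPmf α) ≤ poissonPmf α :=
    Set.indicator_le_self' fun n _ => (hp n).le
  have hsol := hh.mul_poissonPmf_mul_eq j
  have hsol' := hh.mul_poissonPmf_mul_eq (j + 1)
  rw [tailSum_eq_add_tailSum_succ ((hasSum_poissonPmf α).summable.indicator A)] at hsol
  rw [headSum_succ] at hsol'
  have hH := poissonPmf_succ_mul_headSum_le hα.le j
  have hT := poissonPmf_mul_tailSum_succ_le hα.le j
  have hF := headSum_add_tailSum_poissonPmf α (j + 1)
  have hp0 := mul_pos (hp j) (hp 0)
  have hFG : 0 ≤ poissonPmf α j * tailSum (poissonPmf α) (j + 1) +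
      poissonPmf α (j + 1) * headSum (poissonPmf α) j :=
    add_nonneg (mul_nonneg (hp j).le (tailSum_nonneg (fun n => (hp n).le) _))
      (mul_nonneg (hp _).le (headSum_nonneg (fun n => (hp n).le) _))
  rw [← poissonPmf_zero]
  set p := poissonPmf α
  set w := A.indicator p
  set F := headSum p
  set G := tailSum p
  refine le_of_mul_le_mul_left ?_ (mul_pos (hp j) (hp (j + 1)))
  calc p j * p (j + 1) * (α * (h (j + 1 + 1) - h (j + 1)))
      = headSum w j * (p j * G (j + 1) - p (j + 1) * G j)
        + w (j + 1) * (p j * G (j + 1) + p (j + 1) * F j)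
        - tailSum w (j + 1) * (p j * F (j + 1) - p (j + 1) * F j) := by
        linear_combination p j * hsol' - p (j + 1) * hsol
    _ ≤ w (j + 1) * (p j * G (j + 1) + p (j + 1) * F j) := by
      have := mul_nonpos_of_nonneg_of_nonpos (headSum_nonneg hw j) (sub_nonpos.2 hT)
      have := mul_nonneg (tailSum_nonneg hw (j + 1))
        (by linarith : 0 ≤ p j * F (j + 1) - p (j + 1) * F j)
      linarith
    _ ≤ p (j + 1) * (p j * (1 - p 0)) :=
      mul_le_mul (hwp _) (by linear_combination hH + p j * hF) hFG (hp _).le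
    _ = p j * p (j + 1) * (1 - p 0) := by ring

lemma mul_sub_le (hh : IsPoissonSteinSolution α A h) (hα : 0 < α) (h0 : h 0 = 0) :
    ∀ i, α * (h (i + 1) - h i) ≤ 1 - exp (-α)
  | 0 => by simpa [h0] using hh.mul_apply_one_le hα
  | j + 1 => hh.mul_sub_succ_le hα j

end IsPoissonSteinSolution

lemma one_sub_exp_neg_div_le_min {α : ℝ} (hα : 0 < α) :
    (1 - exp (-α)) / α ≤ min 1 (1 / α) := by
  refine le_min ((div_le_one hα).2 ?_) (div_le_div_of_nonneg_right ?_ hα.le)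
  · linarith [add_one_le_exp (-α)]
  · linarith [exp_pos (-α)]

/-- Stein's method for Poisson approximation: the solution `h` (with `h 0 = 0`) of
the Stein equation `α h(i+1) - i h(i) = 1_A(i) - P(Z_α ∈ A)` satisfies
`|h(i+1) - h(i)| ≤ min 1 (1/α)` for all `i`. -/
theorem stein_solution_increment_bound (α : ℝ) (hα : 0 < α) (A : Set ℕ)
    (h : ℕ → ℝ) (h0 : h 0 = 0)
    (hstein : ∀ i : ℕ, α * h (i + 1) - i * h i =
      Set.indicator A (fun _ => (1 : ℝ)) i - ∑' n : ℕ, Set.indicator A (poissonPmf α) n) :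
    ∀ i : ℕ, |h (i + 1) - h i| ≤ min 1 (1 / α) := by
  intro i
  have hsol : IsPoissonSteinSolution α A h := hstein
  have hup := hsol.mul_sub_le hα h0 i
  have hdown := hsol.compl.mul_sub_le hα (by simp [h0]) i
  simp only [Pi.neg_apply] at hdown
  have habs : |α * (h (i + 1) - h i)| ≤ 1 - exp (-α) := abs_le.2 ⟨by linarith, hup⟩
  rw [abs_mul, abs_of_pos hα] at habs
  exact ((le_div_iff₀' hα).2 habs).trans (one_sub_exp_neg_div_le_min hα)
end

section
/- Let η be a Poisson point process on X with finite intensity measure λ, and let g : X × S → ℝ be bounded measurable, where S is the space of finite point configurations. Then E[∑_{x ∈ η} g(x, η \ {x})] = ∫ E[g(x, η)] λ(dx). -/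
/-!
Condition on the number `n` of points. Given `n`, the points are i.i.d. with law
`μ = lam / lam(X)`, so removing the `i`-th point leaves `n - 1` i.i.d. points independent of it:
each of the `n` summands has mean `∫ E[g(x, η_{n-1})] μ(dx)`. The resulting factor `n` is
absorbed by the Poisson weights, `n pₙ = lam(X) pₙ₋₁`, which shifts the series by one and turns
`lam(X) • μ` back into `lam`.
-/

open MeasureTheory

theorem List.eraseIdx_ofFn {α : Type*} {n : ℕ} (f : Fin (n + 1) → α) (i : Fin (n + 1)) :
    (List.ofFn f).eraseIdx i = List.ofFn fun j => f (i.succAbove j) := by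
  refine List.ext_getElem (by simp [List.length_eraseIdx, i.is_le]) fun j _ h₂ => ?_
  simp only [List.length_ofFn] at h₂
  rw [List.getElem_eraseIdx]
  simp only [List.getElem_ofFn]
  split_ifs with h <;> congr 1 <;> simp [Fin.succAbove, Fin.lt_def, h]

theorem summable_poissonPmf (r : ℝ) : Summable (poissonPmf r) :=
  ((Real.summable_pow_div_factorial r).mul_left (Real.exp (-r))).congr fun _ =>
    (mul_div_assoc _ _ _).symm

theorem poissonPmf_succ_mul (r : ℝ) (n : ℕ) :
    poissonPmf r (n + 1) * (n + 1) = r * poissonPmf r n := by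
  simp only [poissonPmf, Nat.factorial_succ, Nat.cast_mul, Nat.cast_succ]
  field_simp
  ring

namespace MeasureTheory

variable {X : Type*} [MeasurableSpace X]

theorem integral_tsum_of_norm_le {E ι : Type*} [NormedAddCommGroup E] [NormedSpace ℝ E]
    [Countable ι] {μ : Measure X} [IsFiniteMeasure μ] {F : ι → X → E} {a : ι → ℝ}
    (hF : ∀ i, AEStronglyMeasurable (F i) μ) (ha : Summable a) (hFa : ∀ i x, ‖F i x‖ ≤ a i) :
    ∫ x, ∑' i, F i x ∂μ = ∑' i, ∫ x, F i x ∂μ := by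
  have hint : ∀ i, Integrable (F i) μ := fun i =>
    .of_bound (hF i) (a i) (.of_forall (hFa i))
  refine (integral_tsum_of_summable_integral_norm hint ?_).symm
  refine (ha.mul_right (μ.real Set.univ)).of_nonneg_of_le
    (fun i => integral_nonneg fun x => norm_nonneg _) fun i => ?_
  exact (Real.le_norm_self _).trans
    (norm_integral_le_of_norm_le_const (.of_forall fun x => (norm_norm (F i x)).trans_le (hFa i x)))

theorem integral_pi_comp_piFinSuccAbove {E : Type*} [NormedAddCommGroup E] [NormedSpace ℝ E]
    (μ : Measure X) [SigmaFinite μ] {n : ℕ} (i : Fin (n + 1)) {f : X → (Fin n → X) → E}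
    (hf : Integrable (Function.uncurry f) (μ.prod (Measure.pi fun _ => μ))) :
    ∫ x, f (x i) (fun j => x (i.succAbove j)) ∂(Measure.pi fun _ => μ)
      = ∫ x, ∫ y, f x y ∂(Measure.pi fun _ => μ) ∂μ :=
  ((measurePreserving_piFinSuccAbove (fun _ => μ) i).integral_comp' (Function.uncurry f)).trans
    (integral_prod _ hf)

theorem integrable_pi_comp_piFinSuccAbove {E : Type*} [NormedAddCommGroup E]
    (μ : Measure X) [SigmaFinite μ] {n : ℕ} (i : Fin (n + 1)) {f : X → (Fin n → X) → E}
    (hf : Integrable (Function.uncurry f) (μ.prod (Measure.pi fun _ => μ))) :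
    Integrable (fun x => f (x i) (fun j => x (i.succAbove j))) (Measure.pi fun _ => μ) :=
  ((measurePreserving_piFinSuccAbove (fun _ => μ) i).integrable_comp_emb
    (MeasurableEquiv.measurableEmbedding _)).2 hf

end MeasureTheory

section Mecke

variable {X : Type*} [MeasurableSpace X] (μ : Measure X) {g : X → Multiset X → ℝ} {C : ℝ}

theorem integral_sum_eraseIdx_ofFn [IsFiniteMeasure μ] (hbdd : ∀ x m, |g x m| ≤ C) {n : ℕ}
    (hmeas : Measurable fun p : X × (Fin n → X) => g p.1 ↑(List.ofFn p.2)) :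
    ∫ x : Fin (n + 1) → X, ∑ i, g (x i) ↑((List.ofFn x).eraseIdx i) ∂(Measure.pi fun _ => μ)
      = (n + 1) * ∫ x, ∫ y : Fin n → X, g x ↑(List.ofFn y) ∂(Measure.pi fun _ => μ) ∂μ := by
  have hint : Integrable (Function.uncurry fun x (y : Fin n → X) => g x ↑(List.ofFn y))
      (μ.prod (Measure.pi fun _ => μ)) :=
    .of_bound hmeas.aestronglyMeasurable C (.of_forall fun p => hbdd _ _)
  simp_rw [List.eraseIdx_ofFn]
  rw [integral_finsetSum _ fun i _ => integrable_pi_comp_piFinSuccAbove μ i hint]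
  simp [integral_pi_comp_piFinSuccAbove μ _ hint]

variable [IsProbabilityMeasure μ]

theorem norm_integral_ofFn_le (hbdd : ∀ x m, |g x m| ≤ C) (n : ℕ) (x : X) :
    ‖∫ y : Fin n → X, g x ↑(List.ofFn y) ∂(Measure.pi fun _ => μ)‖ ≤ C := by
  simpa using norm_integral_le_of_norm_le_const (μ := Measure.pi fun _ : Fin n => μ)
    (f := fun y => g x ↑(List.ofFn y)) (.of_forall fun y => hbdd x _)

theorem tsum_poissonPmf_mul_integral_sum_eraseIdx (r : ℝ) (hbdd : ∀ x m, |g x m| ≤ C)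
    (hmeas : ∀ n : ℕ, Measurable fun p : X × (Fin n → X) => g p.1 ↑(List.ofFn p.2)) :
    ∑' n, poissonPmf r n *
        ∫ x : Fin n → X, ∑ i, g (x i) ↑((List.ofFn x).eraseIdx i) ∂(Measure.pi fun _ => μ)
      = r * ∑' n, poissonPmf r n *
          ∫ x, ∫ y : Fin n → X, g x ↑(List.ofFn y) ∂(Measure.pi fun _ => μ) ∂μ := by
  set J : ℕ → ℝ := fun n => ∫ x, ∫ y : Fin n → X, g x ↑(List.ofFn y) ∂(Measure.pi fun _ => μ) ∂μ
  have hJ : ∀ n, ‖J n‖ ≤ C := fun n => by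
    simpa using norm_integral_le_of_norm_le_const (μ := μ)
      (.of_forall fun x => norm_integral_ofFn_le μ hbdd n x)
  have hsucc : ∀ n : ℕ, poissonPmf r (n + 1) *
      ∫ x : Fin (n + 1) → X, ∑ i, g (x i) ↑((List.ofFn x).eraseIdx i) ∂(Measure.pi fun _ => μ)
        = r * (poissonPmf r n * J n) := fun n => by
    rw [integral_sum_eraseIdx_ofFn μ hbdd (hmeas n), ← mul_assoc, poissonPmf_succ_mul, mul_assoc]
  have hsummable : Summable fun n => poissonPmf r n * J n :=
    .of_norm_bounded ((summable_poissonPmf r).abs.mul_right C) fun n => by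
      rw [norm_mul, Real.norm_eq_abs]
      exact mul_le_mul_of_nonneg_left (hJ n) (abs_nonneg _)
  rw [tsum_eq_zero_add' ((hsummable.mul_left r).congr fun n => (hsucc n).symm), tsum_congr hsucc,
    tsum_mul_left]
  simp only [Finset.univ_eq_empty, Finset.sum_empty, integral_zero, mul_zero, zero_add, J]

theorem integral_tsum_poissonPmf_mul (r : ℝ) (hbdd : ∀ x m, |g x m| ≤ C)
    (hmeas : ∀ n : ℕ, Measurable fun p : X × (Fin n → X) => g p.1 ↑(List.ofFn p.2)) :
    ∫ x, ∑' n, poissonPmf r n * ∫ y : Fin n → X, g x ↑(List.ofFn y) ∂(Measure.pi fun _ => μ) ∂μ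
      = ∑' n, poissonPmf r n *
          ∫ x, ∫ y : Fin n → X, g x ↑(List.ofFn y) ∂(Measure.pi fun _ => μ) ∂μ := by
  rw [integral_tsum_of_norm_le (a := fun n => |poissonPmf r n| * C)
    (fun n => ((hmeas n).stronglyMeasurable.integral_prod_right'.const_mul _).aestronglyMeasurable)
    ((summable_poissonPmf r).abs.mul_right C)]
  · simp_rw [integral_const_mul]
  · intro n x
    rw [norm_mul, Real.norm_eq_abs]
    exact mul_le_mul_of_nonneg_left (norm_integral_ofFn_le μ hbdd n x) (abs_nonneg _)

end Mecke

/-- The (univariate) Mecke formula for a Poisson point process with finite intensity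
measure `lam`, realised as a mixed binomial process: a Poisson(`lam(X)`) number of
i.i.d. points with distribution `lam/lam(X)`.  For bounded measurable
`g : X → (configurations) → ℝ`,
`E[∑_{x ∈ η} g(x, η \ {x})] = ∫ E[g(x, η)] lam(dx)`. -/
theorem mecke_formula {X : Type*} [MeasurableSpace X] (lam : Measure X)
    [IsFiniteMeasure lam] (hc : lam Set.univ ≠ 0)
    (g : X → Multiset X → ℝ) (C : ℝ) (hbdd : ∀ x m, |g x m| ≤ C)
    (hmeas : ∀ n : ℕ, Measurable fun p : X × (Fin n → X) =>
      g p.1 ↑(List.ofFn p.2)) :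
    (∑' n : ℕ, poissonPmf (lam Set.univ).toReal n *
        ∫ x : Fin n → X, ∑ i : Fin n, g (x i) ↑((List.ofFn x).eraseIdx i)
          ∂(Measure.pi fun _ : Fin n => (lam Set.univ)⁻¹ • lam))
      = ∫ x, (∑' n : ℕ, poissonPmf (lam Set.univ).toReal n *
          ∫ y : Fin n → X, g x ↑(List.ofFn y)
            ∂(Measure.pi fun _ : Fin n => (lam Set.univ)⁻¹ • lam)) ∂lam := by
  have : NeZero lam := ⟨fun h => hc (by simp [h])⟩
  rw [← measure_smul_average, average_eq', integral_tsum_poissonPmf_mul _ _ hbdd hmeas,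
    tsum_poissonPmf_mul_integral_sum_eraseIdx _ _ hbdd hmeas]
  rfl
end

section
/- Suppose φ_s ∈ Φ_ε for all s, i.e. inf_x ∫φ_s(x,y)μ(dy) ≥ ε·sup_x ∫φ_s(x,y)μ(dy), and let a_s = sup_x ∫φ_s(x,y)μ(dy). If E[D_{≤j}(G(P_s,φ_s))] → α ∈ (0,∞) for some fixed j, then s·a_s → ∞ and moreover s·a_s = Θ(log s) as s → ∞. -/
/-!
With `g_s(x) = s ∫ φ_s(x,y) μ(dy)` the expected degree at `x`, the Mecke expression is
`s ∫ P(Poisson(g_s(x)) ≤ j) μ(dx)`, and `ε s a_s ≤ g_s ≤ s a_s`. Keeping only the term `i = 0`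
gives `s e^{-s a_s} ≤ E D_{≤j}`, so boundedness forces `s a_s ≥ log s - O(1)`. Conversely, once
`ε s a_s ≥ 1` every term is at most `(s a_s)^j e^{-ε s a_s}`, and since
`t^j e^{-ε t} = O(e^{-ε t / 2})`, staying away from `0` forces `ε s a_s / 2 ≤ log s + O(1)`.
-/

open MeasureTheory Filter Real

section LowDegree

variable {X : Type*} [MeasurableSpace X]

/-- `P(Poisson(g x) ≤ j)` averaged over `x ∼ μ`; for `g x = s ∫ φ_s(x,y) μ(dy)` the Mecke formula
gives `E[D_{≤j}] = s * lowDegreeDensity μ j g`. -/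
noncomputable def lowDegreeDensity (μ : Measure X) (j : ℕ) (g : X → ℝ) : ℝ :=
  ∑ i ∈ Finset.range (j + 1), ∫ x, g x ^ i / i.factorial * exp (-g x) ∂μ

variable {μ : Measure X} [IsProbabilityMeasure μ] {g : X → ℝ}

lemma exp_neg_le_lowDegreeDensity (hg : Measurable g) {t : ℝ} (hg0 : ∀ x, 0 ≤ g x)
    (hgt : ∀ x, g x ≤ t) (j : ℕ) : exp (-t) ≤ lowDegreeDensity μ j g := by
  have hint : Integrable (fun x => exp (-g x)) μ :=
    Integrable.of_mem_Icc 0 1 hg.neg.exp.aemeasurable <| ae_of_all _ fun x =>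
      ⟨(exp_pos _).le, exp_le_one_iff.mpr (neg_nonpos.mpr (hg0 x))⟩
  have hterm_zero : exp (-t) ≤ ∫ x, exp (-g x) ∂μ := by
    simpa using integral_mono (integrable_const _) hint fun x => exp_le_exp.mpr (neg_le_neg (hgt x))
  have hsingle := Finset.single_le_sum (f := fun i => ∫ x, g x ^ i / i.factorial * exp (-g x) ∂μ)
    (fun i _ => integral_nonneg fun x =>
      mul_nonneg (div_nonneg (pow_nonneg (hg0 x) i) (Nat.cast_nonneg _)) (exp_pos _).le)
    (Finset.mem_range.mpr j.succ_pos)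
  simp only [pow_zero, Nat.factorial_zero, Nat.cast_one, div_one, one_mul] at hsingle
  exact hterm_zero.trans hsingle

lemma pow_div_factorial_mul_exp_neg_le {i j : ℕ} (hij : i ≤ j) {c u t : ℝ} (hc : 1 ≤ c)
    (hcu : c ≤ u) (hut : u ≤ t) : u ^ i / i.factorial * exp (-u) ≤ t ^ j * exp (-c) := by
  have hu : 1 ≤ u := hc.trans hcu
  have hpow : u ^ i / i.factorial ≤ t ^ j :=
    calc u ^ i / i.factorial ≤ u ^ i :=
          div_le_self (by positivity) (by exact_mod_cast i.factorial_pos)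
      _ ≤ u ^ j := pow_le_pow_right₀ hu hij
      _ ≤ t ^ j := pow_le_pow_left₀ (by linarith) hut j
  exact mul_le_mul hpow (exp_le_exp.mpr (neg_le_neg hcu)) (exp_pos _).le
    (pow_nonneg (by linarith) j)

lemma lowDegreeDensity_le {c t : ℝ} (hc : 1 ≤ c) (hcg : ∀ x, c ≤ g x) (hgt : ∀ x, g x ≤ t)
    (j : ℕ) : lowDegreeDensity μ j g ≤ (j + 1) * t ^ j * exp (-c) := by
  have hterm : ∀ i ∈ Finset.range (j + 1),
      ∫ x, g x ^ i / i.factorial * exp (-g x) ∂μ ≤ t ^ j * exp (-c) := by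
    intro i hi
    have hij : i ≤ j := Nat.lt_succ_iff.mp (Finset.mem_range.mp hi)
    calc ∫ x, g x ^ i / i.factorial * exp (-g x) ∂μ ≤ ∫ _, t ^ j * exp (-c) ∂μ :=
          integral_mono_of_nonneg
            (ae_of_all _ fun x => mul_nonneg (div_nonneg
              (pow_nonneg (by linarith [hcg x]) i) (Nat.cast_nonneg _)) (exp_pos _).le)
            (integrable_const _)
            (ae_of_all _ fun x => pow_div_factorial_mul_exp_neg_le hij hc (hcg x) (hgt x))
      _ = t ^ j * exp (-c) := by simp
  calc lowDegreeDensity μ j g ≤ (Finset.range (j + 1)).card • (t ^ j * exp (-c)) :=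
        Finset.sum_le_card_nsmul _ _ _ hterm
    _ = (j + 1) * t ^ j * exp (-c) := by simp [mul_assoc]

end LowDegree

lemma log_sub_log_le_of_mul_exp_neg_le {s t β : ℝ} (hs : 0 < s) (h : s * exp (-t) ≤ β) :
    log s - log β ≤ t := by
  have hlog := log_le_log (by positivity) h
  rw [log_mul hs.ne' (exp_pos _).ne', log_exp] at hlog
  linarith

lemma le_log_sub_log_of_le_mul_exp_neg {s t β : ℝ} (hβ : 0 < β) (h : β ≤ s * exp (-t)) :
    t ≤ log s - log β := by
  have hs : 0 < s := pos_of_mul_pos_left (hβ.trans_le h) (exp_pos _).le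
  have hlog := log_le_log hβ h
  rw [log_mul hs.ne' (exp_pos _).ne', log_exp] at hlog
  linarith

lemma pow_mul_exp_neg_mul_le {ε t : ℝ} (hε : 0 < ε) (ht : 0 ≤ t) (j : ℕ) :
    t ^ j * exp (-(ε * t)) ≤ j.factorial * (2 / ε) ^ j * exp (-(ε * t / 2)) := by
  have hfact : (ε * t / 2) ^ j * exp (-(ε * t / 2)) ≤ j.factorial := by
    rw [exp_neg, mul_inv_le_iff₀ (exp_pos _), ← div_le_iff₀' (by positivity)]
    exact pow_div_factorial_le_exp _ (by positivity) j
  have hsplit : exp (-(ε * t)) = exp (-(ε * t / 2)) * exp (-(ε * t / 2)) := by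
    rw [← exp_add]; ring_nf
  calc t ^ j * exp (-(ε * t))
      = (2 / ε) ^ j * ((ε * t / 2) ^ j * exp (-(ε * t / 2))) * exp (-(ε * t / 2)) := by
        rw [hsplit, div_pow, div_pow, mul_pow]; field_simp
    _ ≤ (2 / ε) ^ j * j.factorial * exp (-(ε * t / 2)) := by gcongr
    _ = j.factorial * (2 / ε) ^ j * exp (-(ε * t / 2)) := by ring

section Asymptotics

variable {F T : ℝ → ℝ} {α : ℝ}

lemma eventually_half_log_le_of_mul_exp_neg_le (hF : Tendsto F atTop (nhds α)) (hα : 0 < α)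
    (hlow : ∀ᶠ s in atTop, s * exp (-T s) ≤ F s) : ∀ᶠ s in atTop, 1 / 2 * log s ≤ T s := by
  filter_upwards [hF.eventually_lt_const (lt_two_mul_self hα), hlow, eventually_gt_atTop 0,
    tendsto_log_atTop.eventually_ge_atTop (2 * log (2 * α))] with s hFs hs hs0 hlog
  linarith [log_sub_log_le_of_mul_exp_neg_le hs0 (hs.trans hFs.le)]

lemma eventually_le_mul_log_of_le_pow_mul_exp_neg {ε : ℝ} (j : ℕ) (hF : Tendsto F atTop (nhds α))
    (hα : 0 < α) (hε : 0 < ε) (hT : ∀ᶠ s in atTop, 0 ≤ T s)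
    (hup : ∀ᶠ s in atTop, F s ≤ (j + 1) * s * T s ^ j * exp (-(ε * T s))) :
    ∀ᶠ s in atTop, T s ≤ 4 / ε * log s := by
  set K : ℝ := (j + 1) * j.factorial * (2 / ε) ^ j
  have hK : 0 < K := by positivity
  have hβ : 0 < α / 2 / K := by positivity
  filter_upwards [hF.eventually_const_lt (half_lt_self hα), hup, hT, eventually_ge_atTop 0,
    tendsto_log_atTop.eventually_ge_atTop (-log (α / 2 / K))] with s hFs hs hTs hs0 hlog
  have hbound : α / 2 / K ≤ s * exp (-(ε * T s / 2)) := by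
    rw [div_le_iff₀ hK]
    calc α / 2 ≤ (j + 1) * s * (T s ^ j * exp (-(ε * T s))) := by linarith
      _ ≤ (j + 1) * s * (j.factorial * (2 / ε) ^ j * exp (-(ε * T s / 2))) := by
        gcongr ?_ * ?_
        exact pow_mul_exp_neg_mul_le hε hTs j
      _ = s * exp (-(ε * T s / 2)) * K := by ring
  have hεT := le_log_sub_log_of_le_mul_exp_neg hβ hbound
  rw [div_mul_eq_mul_div, le_div_iff₀ hε]
  linarith

end Asymptotics

theorem degree_threshold_theta_log_general {X : Type*} [MeasurableSpace X] (μ : Measure X)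
    [IsProbabilityMeasure μ] (φ : ℝ → X → X → ℝ) (a : ℝ → ℝ) (ε : ℝ) (hε : 0 < ε)
    (hmeas : ∀ s, Measurable (Function.uncurry (φ s)))
    (h0 : ∀ s x y, 0 ≤ φ s x y)
    (hub : ∀ s x, ∫ y, φ s x y ∂μ ≤ a s)
    (hhom : ∀ s x, ε * a s ≤ ∫ y, φ s x y ∂μ)
    (j : ℕ) (α : ℝ) (hα : 0 < α)
    (hlim : Tendsto (fun s : ℝ => ∑ i ∈ Finset.range (j + 1),
        s * ∫ x, (s * ∫ y, φ s x y ∂μ) ^ i / i.factorial *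
          Real.exp (-(s * ∫ y, φ s x y ∂μ)) ∂μ)
      atTop (nhds α)) :
    Tendsto (fun s => s * a s) atTop atTop ∧
    ∃ c C : ℝ, 0 < c ∧ 0 < C ∧
      ∀ᶠ s in atTop, c * Real.log s ≤ s * a s ∧ s * a s ≤ C * Real.log s := by
  set g : ℝ → X → ℝ := fun s x => s * ∫ y, φ s x y ∂μ
  have hF : Tendsto (fun s => s * lowDegreeDensity μ j (g s)) atTop (nhds α) := by
    simpa only [lowDegreeDensity, Finset.mul_sum] using hlim
  have hg : ∀ s, Measurable (g s) := fun s =>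
    measurable_const.mul (hmeas s).stronglyMeasurable.integral_prod_right'.measurable
  have hlow : ∀ᶠ s in atTop, s * exp (-(s * a s)) ≤ s * lowDegreeDensity μ j (g s) := by
    filter_upwards [eventually_ge_atTop 0] with s hs
    exact mul_le_mul_of_nonneg_left (exp_neg_le_lowDegreeDensity (hg s)
      (fun x => mul_nonneg hs (integral_nonneg (h0 s x)))
      (fun x => mul_le_mul_of_nonneg_left (hub s x) hs) j) hs
  have hlog_le := eventually_half_log_le_of_mul_exp_neg_le hF hα hlow
  have hT : Tendsto (fun s => s * a s) atTop atTop :=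
    tendsto_atTop_mono' _ hlog_le (tendsto_log_atTop.const_mul_atTop one_half_pos)
  have hup : ∀ᶠ s in atTop, s * lowDegreeDensity μ j (g s) ≤
      (j + 1) * s * (s * a s) ^ j * exp (-(ε * (s * a s))) := by
    filter_upwards [eventually_ge_atTop 0, hT.eventually_ge_atTop (1 / ε)] with s hs hεT
    have hdeg : ∀ x, ε * (s * a s) ≤ g s x := fun x => by
      simpa only [mul_left_comm ε] using mul_le_mul_of_nonneg_left (hhom s x) hs
    calc s * lowDegreeDensity μ j (g s) ≤ s * ((j + 1) * (s * a s) ^ j * exp (-(ε * (s * a s)))) :=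
          mul_le_mul_of_nonneg_left (lowDegreeDensity_le ((div_le_iff₀' hε).mp hεT) hdeg
            (fun x => mul_le_mul_of_nonneg_left (hub s x) hs) j) hs
      _ = (j + 1) * s * (s * a s) ^ j * exp (-(ε * (s * a s))) := by ring
  exact ⟨hT, 1 / 2, 4 / ε, one_half_pos, by positivity, hlog_le.and
    (eventually_le_mul_log_of_le_pow_mul_exp_neg j hF hα hε (hT.eventually_ge_atTop 0) hup)⟩

/-- If `φ_s` is `ε`-homogeneous with `a_s = sup_x ∫ φ_s(x,y) μ(dy)` and the expected
number of vertices of degree at most `j` (given by the Mecke formula) tends to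
`α ∈ (0,∞)`, then `s⋅a_s → ∞` and moreover `s⋅a_s = Θ(log s)` as `s → ∞`. -/
theorem degree_threshold_theta_log {X : Type*} [MeasurableSpace X] (μ : Measure X)
    [IsProbabilityMeasure μ] (φ : ℝ → X → X → ℝ) (a : ℝ → ℝ) (ε : ℝ) (hε : 0 < ε)
    (hmeas : ∀ s, Measurable (Function.uncurry (φ s)))
    (h0 : ∀ s x y, 0 ≤ φ s x y) (h1 : ∀ s x y, φ s x y ≤ 1)
    (hsym : ∀ s x y, φ s x y = φ s y x)
    (hub : ∀ s x, ∫ y, φ s x y ∂μ ≤ a s)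
    (hhom : ∀ s x, ε * a s ≤ ∫ y, φ s x y ∂μ)
    (j : ℕ) (α : ℝ) (hα : 0 < α)
    (hlim : Tendsto (fun s : ℝ => ∑ i ∈ Finset.range (j + 1),
        s * ∫ x, (s * ∫ y, φ s x y ∂μ) ^ i / i.factorial *
          Real.exp (-(s * ∫ y, φ s x y ∂μ)) ∂μ)
      atTop (nhds α)) :
    Tendsto (fun s => s * a s) atTop atTop ∧
    ∃ c C : ℝ, 0 < c ∧ 0 < C ∧
      ∀ᶠ s in atTop, c * Real.log s ≤ s * a s ∧ s * a s ≤ C * Real.log s :=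
  degree_threshold_theta_log_general μ φ a ε hε hmeas h0 hub hhom j α hα hlim
end
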